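/- For every probability vector p and every ε > 0 there exist δ_0 > 0 and c > 0, depending only on p and ε, such that for all 0 < δ ≤ δ_0 and all real C ≥ C_p^− + ε, every δ-stable tuple (b_0, b_{k−1}, c_0, …, c_{k−1}) of nonnegative reals with min(b_0, b_{k−1}) = 0 satisfies c_X ≤ −c < 0. -/

import Mathlib

open Finset

namespace RiffleShuffle

/-- `phi p t = ∑ i, p i ^ t`. -/
noncomputable def phi {k : ℕ} (p : Fin k → ℝ) (t : ℝ) : ℝ := ∑ i, p i ^ t

/-- `psi p t = - log (phi p t)`. -/
noncomputable def psi {k : ℕ} (p : Fin k → ℝ) (t : ℝ) : ℝ := - Real.log (phi p t)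

/-- `C_p = (3+θ)/(4 ψ_p(2))`, where `θ` is the solution of `φ_p(θ) = φ_p(2)²`. -/
noncomputable def Cmain {k : ℕ} (p : Fin k → ℝ) (θ : ℝ) : ℝ := (3 + θ) / (4 * psi p 2)

/-- The entropy of the probability vector with weights `a i / (∑ j, a j)`.  The conventions
`x * log (y/0) = 0` for `x = 0` and `0/0 = 0` built into real division make this agree with
the usual convention (zero entries contribute `0`, and `H = 0` when all entries vanish). -/
noncomputable def Hent {k : ℕ} (a : Fin k → ℝ) : ℝ :=
  (∑ i, a i * Real.log ((∑ j, a j) / a i)) / (∑ j, a j)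

/-- `c_L` of a digit profile; `d0` and `dlast` denote the digits `0` and `k-1`. -/
noncomputable def cL {k : ℕ} (p : Fin k → ℝ) (d0 dlast : Fin k) (b0 bk : ℝ)
    (c : Fin k → ℝ) : ℝ :=
  1 - b0 * Real.log (1 / p d0) - bk * Real.log (1 / p dlast) - ∑ i, c i * Real.log (1 / p i)

/-- `c_F` of a digit profile. -/
noncomputable def cF {k : ℕ} (p : Fin k → ℝ) (d0 dlast : Fin k) (b0 bk : ℝ) : ℝ :=
  (1 - b0 * Real.log (1 / p d0) - bk * Real.log (1 / p dlast)) / 2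

/-- `c_E` of a digit profile, with `C` playing the role of `K / log N`. -/
noncomputable def cE {k : ℕ} (p : Fin k → ℝ) (C b0 bk : ℝ) (c : Fin k → ℝ) : ℝ :=
  (b0 + bk + (∑ i, c i) - C) * psi p 2

/-- `c_X = c_tot H(c_0,…,c_{k-1}) + 5 c_L - 2 c_F + 2 c_E`. -/
noncomputable def cX {k : ℕ} (p : Fin k → ℝ) (d0 dlast : Fin k) (C b0 bk : ℝ)
    (c : Fin k → ℝ) : ℝ :=
  (∑ i, c i) * Hent c + 5 * cL p d0 dlast b0 bk c - 2 * cF p d0 dlast b0 bk +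
    2 * cE p C b0 bk c

/-!
Write `λᵢ = log (1/pᵢ)`, `B = b₀λ₀ + b_{k-1}λ_{k-1}` and `S = ∑ cᵢλᵢ`, so that
`c_L - c_F = (1 - B)/2 - S`. The defining equation of `θ` makes `qᵢ = pᵢ^θ / φ_p(2)²` a probability
vector, and Gibbs' inequality for `c` against `q` gives `c_tot H(c) + 2ψ_p(2) c_tot ≤ θ S`.
Substituting, `c_X ≤ (3 + θ)(1 - B)/2 + 2(b₀ + b_{k-1})ψ_p(2) - 2Cψ_p(2) + (5 - θ)(c_L - c_F)`.
Since `(3 + θ)/2 = 2C_pψ_p(2)` and `bⱼ ≤ C_p^- bⱼλⱼ`, the first two terms are at most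
`2C_p^-ψ_p(2)`, hence `c_X ≤ -2εψ_p(2) + 2|5 - θ|δ`.
-/

theorem mul_log_div_add_le_exp_mul_sub {t T : ℝ} (a : ℝ) (ht : 0 ≤ t) (htT : t ≤ T) :
    t * (Real.log (T / t) + a) ≤ Real.exp a * T - t := by
  rcases ht.eq_or_lt with rfl | ht
  · simpa using mul_nonneg (Real.exp_pos a).le htT
  have hexp : t * Real.exp (Real.log (T / t) + a) = Real.exp a * T := by
    rw [Real.exp_add, Real.exp_log (div_pos (ht.trans_le htT) ht)]
    field_simp
  nlinarith [Real.add_one_le_exp (Real.log (T / t) + a)]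

/-- Gibbs' inequality for the nonnegative weights `c` against the probability vector `exp ∘ a`. -/
theorem sum_mul_log_div_add_nonpos {ι : Type*} [Fintype ι] {c a : ι → ℝ} (hc : ∀ i, 0 ≤ c i)
    (ha : ∑ i, Real.exp (a i) = 1) :
    ∑ i, c i * (Real.log ((∑ j, c j) / c i) + a i) ≤ 0 := by
  calc ∑ i, c i * (Real.log ((∑ j, c j) / c i) + a i)
      ≤ ∑ i, (Real.exp (a i) * ∑ j, c j - c i) :=
        sum_le_sum fun i _ => mul_log_div_add_le_exp_mul_sub (a i) (hc i)
          (single_le_sum (fun j _ => hc j) (mem_univ i))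
    _ = 0 := by rw [sum_sub_distrib, ← sum_mul, ha, one_mul, sub_self]

theorem lt_one_of_sum_eq_one {ι : Type*} [Fintype ι] [Nontrivial ι] {p : ι → ℝ}
    (hpos : ∀ i, 0 < p i) (hsum : ∑ i, p i = 1) (i : ι) : p i < 1 := by
  obtain ⟨j, hj⟩ := exists_ne i
  rw [← hsum]
  exact single_lt_sum hj (mem_univ i) (mem_univ j) (hpos j) fun t _ _ => (hpos t).le

section ProbabilityVector

variable {k : ℕ} {p : Fin k → ℝ}

theorem phi_two_eq_sum_sq (p : Fin k → ℝ) : phi p 2 = ∑ i, p i ^ 2 := by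
  simp only [phi, Real.rpow_two]

theorem phi_two_pos [Nonempty (Fin k)] (hpos : ∀ i, 0 < p i) : 0 < phi p 2 := by
  rw [phi_two_eq_sum_sq]
  exact sum_pos (fun i _ => pow_pos (hpos i) 2) univ_nonempty

theorem psi_two_pos [Nontrivial (Fin k)] (hpos : ∀ i, 0 < p i) (hsum : ∑ i, p i = 1) :
    0 < psi p 2 := by
  have hlt : phi p 2 < 1 := by
    rw [phi_two_eq_sum_sq, ← hsum]
    refine sum_lt_sum_of_nonempty univ_nonempty fun i _ => ?_
    nlinarith [hpos i, lt_one_of_sum_eq_one hpos hsum i]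
  exact neg_pos.mpr (Real.log_neg (phi_two_pos hpos) hlt)

theorem sum_exp_two_psi_sub_mul_log_eq_one [Nonempty (Fin k)] (hpos : ∀ i, 0 < p i) {θ : ℝ}
    (hθ : phi p θ = phi p 2 ^ 2) :
    ∑ i, Real.exp (2 * psi p 2 - θ * Real.log (1 / p i)) = 1 := by
  have hφ := phi_two_pos hpos
  have hterm : ∀ i, Real.exp (2 * psi p 2 - θ * Real.log (1 / p i)) = p i ^ θ / phi p 2 ^ 2 := by
    intro i
    have hexponent : 2 * psi p 2 - θ * Real.log (1 / p i)
        = Real.log (p i ^ θ) - Real.log (phi p 2 ^ 2) := by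
      rw [Real.log_rpow (hpos i), Real.log_pow, one_div, Real.log_inv, psi]
      push_cast
      ring
    rw [hexponent, Real.exp_sub, Real.exp_log (Real.rpow_pos_of_pos (hpos i) θ),
      Real.exp_log (pow_pos hφ 2)]
  simp only [hterm, ← sum_div]
  rw [← phi, hθ, div_self (pow_pos hφ 2).ne']

end ProbabilityVector

theorem sum_mul_Hent {k : ℕ} (c : Fin k → ℝ) :
    (∑ i, c i) * Hent c = ∑ i, c i * Real.log ((∑ j, c j) / c i) := by
  rcases eq_or_ne (∑ i, c i) 0 with h | h
  · simp [h]
  · rw [Hent, mul_div_cancel₀ _ h]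

theorem cX_le {k : ℕ} {p : Fin k → ℝ} (hlog : ∀ i, 0 < Real.log (1 / p i))
    (hψ : 0 < psi p 2) {θ : ℝ}
    (hnorm : ∑ i, Real.exp (2 * psi p 2 - θ * Real.log (1 / p i)) = 1)
    {d0 dlast : Fin k} {C' : ℝ} (hCp : Cmain p θ ≤ C') (hd0 : 1 / Real.log (1 / p d0) ≤ C')
    (hdlast : 1 / Real.log (1 / p dlast) ≤ C') (C : ℝ) {b0 bk : ℝ} {cv : Fin k → ℝ}
    (hb0 : 0 ≤ b0) (hbk : 0 ≤ bk) (hcv : ∀ i, 0 ≤ cv i)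
    (hstable : 0 ≤ cL p d0 dlast b0 bk cv - cF p d0 dlast b0 bk) :
    cX p d0 dlast C b0 bk cv
      ≤ 2 * (C' - C) * psi p 2 + (5 - θ) * (cL p d0 dlast b0 bk cv - cF p d0 dlast b0 bk) := by
  set B := b0 * Real.log (1 / p d0) + bk * Real.log (1 / p dlast)
  set S := ∑ i, cv i * Real.log (1 / p i)
  have hentropy : (∑ i, cv i) * Hent cv + 2 * psi p 2 * ∑ i, cv i ≤ θ * S := by
    have hgibbs := sum_mul_log_div_add_nonpos hcv hnorm
    simp only [mul_add, mul_sub, sum_add_distrib, sum_sub_distrib] at hgibbs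
    rw [sum_mul_Hent, mul_sum, mul_sum]
    simp only [mul_left_comm _ θ, mul_comm (cv _) (2 * psi p 2)] at hgibbs ⊢
    linarith
  have hS : 0 ≤ S := sum_nonneg fun i _ => mul_nonneg (hcv i) (hlog i).le
  have hB : B ≤ 1 := by simp only [cL, cF] at hstable; linarith
  have hθ : (3 + θ) / 2 ≤ 2 * C' * psi p 2 := by
    rw [Cmain, div_le_iff₀ (by positivity)] at hCp
    linarith
  have hbB : b0 + bk ≤ C' * B := by
    have h0 := (div_le_iff₀ (hlog d0)).mp hd0
    have hlast := (div_le_iff₀ (hlog dlast)).mp hdlast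
    nlinarith [mul_le_mul_of_nonneg_left h0 hb0, mul_le_mul_of_nonneg_left hlast hbk]
  simp only [cX, cL, cF, cE]
  nlinarith [mul_le_mul_of_nonneg_left hθ (sub_nonneg.mpr hB),
    mul_le_mul_of_nonneg_right hbB hψ.le]

/-- **Lemma (numerics for the upper bound)**: for `δ` small enough and
`C ≥ C_p^- + ε` (where `C_p^- = max(C_p, 1/log(1/p₀), 1/log(1/p_{k-1}))`), every `δ`-stable
digit profile satisfies `c_X ≤ -c < 0` for some `c = c(p,ε) > 0`. -/
theorem cX_neg (k : ℕ) (hk : 2 ≤ k) (p : Fin k → ℝ)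
    (hpos : ∀ i, 0 < p i) (hsum : ∑ i, p i = 1)
    (θ : ℝ) (hθ : phi p θ = (phi p 2) ^ 2) (ε : ℝ) (hε : 0 < ε) :
    ∃ δ₀ : ℝ, 0 < δ₀ ∧ ∃ c : ℝ, 0 < c ∧
      ∀ δ : ℝ, 0 < δ → δ ≤ δ₀ →
      ∀ C : ℝ,
        max (Cmain p θ) (max (1 / Real.log (1 / p ⟨0, by omega⟩))
          (1 / Real.log (1 / p ⟨k - 1, by omega⟩))) + ε ≤ C →
      ∀ (b0 bk : ℝ) (cv : Fin k → ℝ),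
        0 ≤ b0 → 0 ≤ bk → (∀ i, 0 ≤ cv i) → min b0 bk = 0 →
        cL p ⟨0, by omega⟩ ⟨k - 1, by omega⟩ b0 bk cv - cF p ⟨0, by omega⟩ ⟨k - 1, by omega⟩ b0 bk
          ∈ Set.Icc δ (2 * δ) →
        cX p ⟨0, by omega⟩ ⟨k - 1, by omega⟩ C b0 bk cv ≤ -c := by
  have : Nontrivial (Fin k) := Fin.nontrivial_iff_two_le.mpr hk
  have hψ := psi_two_pos hpos hsum
  have hlog : ∀ i, 0 < Real.log (1 / p i) := fun i =>
    Real.log_pos (one_lt_one_div (hpos i) (lt_one_of_sum_eq_one hpos hsum i))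
  refine ⟨ε * psi p 2 / (2 * (|5 - θ| + 1)), by positivity, ε * psi p 2, by positivity, ?_⟩
  intro δ hδ hδ₀ C hC b0 bk cv hb0 hbk hcv _ ⟨hlo, hhi⟩
  have hbound := cX_le hlog hψ (sum_exp_two_psi_sub_mul_log_eq_one hpos hθ)
    (le_max_left _ _) ((le_max_left _ _).trans (le_max_right _ _))
    ((le_max_right _ _).trans (le_max_right _ _)) C hb0 hbk hcv (hδ.le.trans hlo)
  have hdrift : (5 - θ) * (cL p ⟨0, by omega⟩ ⟨k - 1, by omega⟩ b0 bk cv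
      - cF p ⟨0, by omega⟩ ⟨k - 1, by omega⟩ b0 bk) ≤ ε * psi p 2 :=
    calc _ ≤ |5 - θ| * (2 * δ) := (mul_le_mul_of_nonneg_right (le_abs_self _)
            (hδ.le.trans hlo)).trans (mul_le_mul_of_nonneg_left hhi (abs_nonneg _))
      _ ≤ 2 * (|5 - θ| + 1) * δ := by linarith
      _ ≤ ε * psi p 2 := by rwa [le_div_iff₀' (by positivity)] at hδ₀
  linarith [mul_le_mul_of_nonneg_right hC hψ.le]

end RiffleShuffle
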